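/- arXiv:math/0611960 — 2 statements merged into one kernel-verified Lean document; each statement's English description precedes it below -/
import Mathlib

section
/- Let A1, A2, A3 be three non-collinear points in the plane, and let a line (d) intersect lines A1A2, A2A3, A3A1 at points M1, M2, M3 respectively, with each M_i distinct from the vertices. Then (dist(M1,A1)/dist(M1,A2)) · (dist(M2,A2)/dist(M2,A3)) · (dist(M3,A3)/dist(M3,A1)) = 1. -/
local notation "E" => EuclideanSpace ℝ (Fin 2)

noncomputable def det2 (u v : E) : ℝ := u 0 * v 1 - u 1 * v 0

lemma det2_smul (r s : ℝ) (w : E) : det2 (r • w) (s • w) = 0 := by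
  simp [det2]; ring

lemma collinear_det (p q r : E) (h : Collinear ℝ ({p, q, r} : Set E)) :
    det2 (q - p) (r - p) = 0 := by
  obtain ⟨v, hv⟩ := (collinear_iff_of_mem (Set.mem_insert p _)).1 h
  obtain ⟨rq, hq⟩ := hv q (by simp)
  obtain ⟨rr, hr⟩ := hv r (by simp)
  have e1 : q - p = rq • v := by rw [hq]; simp
  have e2 : r - p = rr • v := by rw [hr]; simp
  rw [e1, e2]; exact det2_smul _ _ _

lemma collinear_of_det (p : E) (u v : E) (hu : u ≠ 0) (h : det2 u v = 0) :
    Collinear ℝ ({p, p + u, p + v} : Set E) := by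
  have hc : ∃ k : ℝ, v = k • u := by
    by_cases h0 : u 0 = 0
    · have h1 : u 1 ≠ 0 := fun h1 => hu (by ext i; fin_cases i <;> simp [h0, h1])
      have hv0 : v 0 = 0 := by
        have h' := h; simp [det2, h0] at h'
        rcases h' with h' | h'
        · exact absurd h' h1
        · exact h'
      refine ⟨v 1 / u 1, ?_⟩
      ext i; fin_cases i <;> simp [h0, hv0] <;> field_simp
    · refine ⟨v 0 / u 0, ?_⟩
      simp [det2, sub_eq_zero] at h
      ext i; fin_cases i <;> simp <;> field_simp <;> linear_combination h
  obtain ⟨k, hk⟩ := hc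
  rw [collinear_iff_of_mem (Set.mem_insert p _)]
  refine ⟨u, fun q hq => ?_⟩
  simp only [Set.mem_insert_iff, Set.mem_singleton_iff] at hq
  rcases hq with rfl | rfl | rfl
  · exact ⟨0, by simp⟩
  · exact ⟨1, by simp [add_comm]⟩
  · exact ⟨k, by simp [hk, add_comm]⟩

lemma det2_comb (u v : E) (x y z w : ℝ) :
    det2 (x • u + y • v) (z • u + w • v) = (x * w - y * z) * det2 u v := by
  simp [det2]; ring

lemma exists_param (p q m : E) (hpq : q ≠ p) (h : Collinear ℝ ({p, q, m} : Set E)) :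
    ∃ t : ℝ, m - p = t • (q - p) := by
  obtain ⟨w, hw⟩ := (collinear_iff_of_mem (Set.mem_insert p _)).1 h
  obtain ⟨rq, hq⟩ := hw q (by simp)
  obtain ⟨rm, hm⟩ := hw m (by simp)
  have hrq : rq ≠ 0 := by
    rintro rfl; apply hpq; rw [hq]; simp
  refine ⟨rm / rq, ?_⟩
  have e1 : q - p = rq • w := by rw [hq]; simp
  have e2 : m - p = rm • w := by rw [hm]; simp
  rw [e1, e2, smul_smul, div_mul_cancel₀ _ hrq]

theorem menelaus_triangle (A1 A2 A3 M1 M2 M3 : EuclideanSpace ℝ (Fin 2))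
    (hA : ¬ Collinear ℝ ({A1, A2, A3} : Set (EuclideanSpace ℝ (Fin 2))))
    (hd : Collinear ℝ ({M1, M2, M3} : Set (EuclideanSpace ℝ (Fin 2))))
    (h1 : Collinear ℝ ({A1, A2, M1} : Set (EuclideanSpace ℝ (Fin 2))))
    (h2 : Collinear ℝ ({A2, A3, M2} : Set (EuclideanSpace ℝ (Fin 2))))
    (h3 : Collinear ℝ ({A3, A1, M3} : Set (EuclideanSpace ℝ (Fin 2))))
    (hM1A1 : M1 ≠ A1) (hM1A2 : M1 ≠ A2)
    (hM2A2 : M2 ≠ A2) (hM2A3 : M2 ≠ A3)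
    (hM3A3 : M3 ≠ A3) (hM3A1 : M3 ≠ A1) :
    (dist M1 A1 / dist M1 A2) * (dist M2 A2 / dist M2 A3) *
      (dist M3 A3 / dist M3 A1) = 1 := by
  have hA12 : A2 ≠ A1 := by
    rintro rfl; exact hA (by simpa using (collinear_pair ℝ A2 A3).subset (by simp))
  have hA23 : A3 ≠ A2 := by
    rintro rfl; exact hA (by
      have : ({A1, A3, A3} : Set E) = {A1, A3} := by aesop
      rw [this]; exact collinear_pair ℝ A1 A3)
  have hA31 : A1 ≠ A3 := by
    rintro rfl; exact hA (by
      have : ({A1, A2, A1} : Set E) = {A1, A2} := by aesop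
      rw [this]; exact collinear_pair ℝ A1 A2)
  set u := A2 - A1 with hu_def
  set v := A3 - A1 with hv_def
  have hD : det2 u v ≠ 0 := by
    intro h0
    apply hA
    have := collinear_of_det A1 u v (by simpa [hu_def, sub_eq_zero] using hA12) h0
    simpa [hu_def, hv_def] using this
  obtain ⟨a, ha⟩ := exists_param A1 A2 M1 hA12 h1
  obtain ⟨b, hb⟩ := exists_param A2 A3 M2 hA23 h2
  obtain ⟨c, hc⟩ := exists_param A3 A1 M3 hA31 h3
  -- express differences
  have e21 : M2 - M1 = (1 - a - b) • u + b • v := by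
    have : M2 - M1 = (M2 - A2) + (A2 - A1) - (M1 - A1) := by abel
    rw [this, ha, hb]
    have : A3 - A2 = v - u := by rw [hu_def, hv_def]; abel
    rw [this]
    module
  have e31 : M3 - M1 = (-a) • u + (1 - c) • v := by
    have : M3 - M1 = (M3 - A3) + (A3 - A1) - (M1 - A1) := by abel
    rw [this, ha, hc]
    have : A1 - A3 = -v := by rw [hv_def]; abel
    rw [this]
    module
  have hdet := collinear_det M1 M2 M3 hd
  rw [e21, e31, det2_comb] at hdet
  have key : (1 - a - b) * (1 - c) + a * b = 0 := by
    rcases mul_eq_zero.1 hdet with h | h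
    · linarith
    · exact absurd h hD
  -- nonzero params
  have ha0 : a ≠ 0 := by
    rintro rfl; apply hM1A1; have := ha; simp [sub_eq_zero] at this; exact this
  have ha1 : a ≠ 1 := by
    rintro rfl; rw [one_smul] at ha; exact hM1A2 (sub_left_inj.mp ha)
  have hb0 : b ≠ 0 := by
    rintro rfl; apply hM2A2; have := hb; simp [sub_eq_zero] at this; exact this
  have hb1 : b ≠ 1 := by
    rintro rfl; rw [one_smul] at hb; exact hM2A3 (sub_left_inj.mp hb)
  have hc0 : c ≠ 0 := by
    rintro rfl; apply hM3A3; have := hc; simp [sub_eq_zero] at this; exact this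
  have hc1 : c ≠ 1 := by
    rintro rfl; rw [one_smul] at hc; exact hM3A1 (sub_left_inj.mp hc)
  -- distances
  set w := A3 - A2 with hw_def
  set z := A1 - A3 with hz_def
  have hnu : ‖u‖ ≠ 0 := by simpa [hu_def, sub_eq_zero] using hA12
  have hnw : ‖w‖ ≠ 0 := by simpa [hw_def, sub_eq_zero] using hA23
  have hnz : ‖z‖ ≠ 0 := by simpa [hz_def, sub_eq_zero] using hA31
  have n1 : dist M1 A1 = |a| * ‖u‖ := by
    rw [dist_eq_norm, ha, norm_smul, Real.norm_eq_abs]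
  have m1 : M1 - A2 = (a - 1) • u := by
    rw [sub_smul, one_smul, ← ha, hu_def]; abel
  have n2 : dist M1 A2 = |a - 1| * ‖u‖ := by
    rw [dist_eq_norm, m1, norm_smul, Real.norm_eq_abs]
  have n3 : dist M2 A2 = |b| * ‖w‖ := by
    rw [dist_eq_norm, hb, norm_smul, Real.norm_eq_abs]
  have m2 : M2 - A3 = (b - 1) • w := by
    rw [sub_smul, one_smul, ← hb, hw_def]; abel
  have n4 : dist M2 A3 = |b - 1| * ‖w‖ := by
    rw [dist_eq_norm, m2, norm_smul, Real.norm_eq_abs]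
  have n5 : dist M3 A3 = |c| * ‖z‖ := by
    rw [dist_eq_norm, hc, norm_smul, Real.norm_eq_abs]
  have m3 : M3 - A1 = (c - 1) • z := by
    rw [sub_smul, one_smul, ← hc, hz_def]; abel
  have n6 : dist M3 A1 = |c - 1| * ‖z‖ := by
    rw [dist_eq_norm, m3, norm_smul, Real.norm_eq_abs]
  have key2 : (a - 1) * (b - 1) * (c - 1) = a * b * c := by
    linear_combination -key
  rw [n1, n2, n3, n4, n5, n6,
    mul_div_mul_right _ _ hnu, mul_div_mul_right _ _ hnw, mul_div_mul_right _ _ hnz,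
    div_mul_div_comm, div_mul_div_comm, ← abs_mul, ← abs_mul, ← abs_mul, ← abs_mul,
    key2]
  exact div_self (abs_ne_zero.mpr (by positivity))
end

section
/- Let A1, A2, A3, A4 be points in the plane forming a quadrilateral, and let a line (d) intersect lines A1A2, A2A3, A3A4, A4A1 at points M1, M2, M3, M4 respectively (each distinct from the vertices), and intersect the diagonal line A2A4 at a point M distinct from A2, A4. Then (dist(M1,A1)/dist(M1,A2)) · (dist(M2,A2)/dist(M2,A3)) · (dist(M3,A3)/dist(M3,A4)) · (dist(M4,A4)/dist(M4,A1)) = 1. -/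
/-!
Writing the points of the sides of a triangle `ABC` as `lineMap A B p`, `lineMap B C q`,
`lineMap C A r`, they are collinear exactly when the determinant of their barycentric
coordinates vanishes, i.e. `p q r = -(1 - p)(1 - q)(1 - r)`; taking norms gives Menelaus'
theorem for a triangle. The diagonal `A₂A₄` cuts the quadrilateral into the triangles
`A₁A₂A₄` and `A₄A₂A₃`, and the two Menelaus identities for the line `d` multiply to the
claim, the ratios in which `d` divides the diagonal cancelling.
-/

open AffineMap

section Field

variable {k V P : Type*} [Field k] [AddCommGroup V] [Module k V] [AddTorsor V P]

theorem Collinear.exists_smul_vsub_add_smul_vsub_eq_zero {p₁ p₂ p₃ : P}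
    (h : Collinear k {p₁, p₂, p₃}) :
    ∃ s t : k, (s ≠ 0 ∨ t ≠ 0) ∧ s • (p₂ -ᵥ p₁) + t • (p₃ -ᵥ p₁) = 0 := by
  obtain ⟨v, hv⟩ := (collinear_iff_of_mem (Set.mem_insert p₁ _)).1 h
  obtain ⟨a, rfl⟩ := hv p₂ (by simp)
  obtain ⟨b, rfl⟩ := hv p₃ (by simp)
  simp only [vadd_vsub]
  by_cases ha : a = 0
  · exact ⟨1, 0, .inl one_ne_zero, by simp [ha]⟩
  · exact ⟨b, -a, .inr (neg_ne_zero.2 ha), by module⟩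

theorem collinear_of_smul_vsub_add_smul_vsub_eq_zero {p₁ p₂ p₃ : P} {s t : k}
    (hst : s ≠ 0 ∨ t ≠ 0) (h : s • (p₂ -ᵥ p₁) + t • (p₃ -ᵥ p₁) = 0) :
    Collinear k {p₁, p₂, p₃} := by
  rw [collinear_iff_of_mem (Set.mem_insert p₁ _)]
  simp only [Set.mem_insert_iff, Set.mem_singleton_iff, forall_eq_or_imp, forall_eq]
  by_cases ht : t = 0
  · have hp₂ : p₂ = p₁ := by simpa [ht, hst.resolve_right (not_not.2 ht)] using h
    exact ⟨p₃ -ᵥ p₁, ⟨0, by simp⟩, ⟨0, by simp [hp₂]⟩, ⟨1, by simp⟩⟩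
  · have hp₃ : p₃ -ᵥ p₁ = (-s / t) • (p₂ -ᵥ p₁) := by
      apply smul_right_injective V ht
      simp only
      rw [smul_smul, mul_div_cancel₀ _ ht]
      linear_combination (norm := module) h
    exact ⟨p₂ -ᵥ p₁, ⟨0, by simp⟩, ⟨1, by simp⟩, ⟨-s / t, by rw [← hp₃, vsub_vadd]⟩⟩

theorem Collinear.exists_lineMap_eq {A B X : P} (h : Collinear k {A, B, X}) (hAB : A ≠ B) :
    ∃ t : k, lineMap A B t = X :=
  mem_affineSpan_pair_iff_exists_lineMap_eq.1
    (h.mem_affineSpan_of_mem_of_ne (by simp) (by simp) (by simp) hAB)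

theorem mul_mul_eq_neg_of_collinear_lineMap {A B C : P} (hABC : ¬Collinear k {A, B, C})
    {p q r : k} (h : Collinear k {lineMap A B p, lineMap B C q, lineMap C A r}) :
    p * q * r = -((1 - p) * (1 - q) * (1 - r)) := by
  obtain ⟨s, t, hst, hrel⟩ := h.exists_smul_vsub_add_smul_vsub_eq_zero
  have hP : lineMap A B p -ᵥ A = p • (B -ᵥ A) := lineMap_vsub_left A B p
  have hQ : lineMap B C q -ᵥ A = (1 - q) • (B -ᵥ A) + q • (C -ᵥ A) := by
    rw [← vsub_add_vsub_cancel _ B A, lineMap_vsub_left, ← vsub_sub_vsub_cancel_right C B A]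
    module
  have hR : lineMap C A r -ᵥ A = (1 - r) • (C -ᵥ A) := lineMap_vsub_right C A r
  rw [← vsub_sub_vsub_cancel_right _ _ A, ← vsub_sub_vsub_cancel_right (lineMap C A r) _ A,
    hP, hQ, hR] at hrel
  have hcoef : (s * (1 - p - q) - t * p) • (B -ᵥ A) + (s * q + t * (1 - r)) • (C -ᵥ A) = 0 := by
    linear_combination (norm := module) hrel
  obtain ⟨e₁, e₂⟩ : s * (1 - p - q) - t * p = 0 ∧ s * q + t * (1 - r) = 0 := by
    by_contra hne
    exact hABC (collinear_of_smul_vsub_add_smul_vsub_eq_zero (not_and_or.1 hne) hcoef)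
  -- `(s, t)` is a nonzero kernel vector of a 2×2 system whose determinant is the claim.
  rcases hst with hs | ht
  · refine mul_left_cancel₀ hs ?_
    linear_combination (1 - r) * e₁ + p * e₂
  · refine mul_left_cancel₀ ht ?_
    linear_combination -q * e₁ + (1 - p - q) * e₂

end Field

theorem menelaus_triangle_s11 {𝕜 V P : Type*} [NormedField 𝕜] [SeminormedAddCommGroup V]
    [NormedSpace 𝕜 V] [MetricSpace P] [NormedAddTorsor V P] {A B C X Y Z : P}
    (hABC : ¬Collinear 𝕜 {A, B, C})
    (hX : Collinear 𝕜 {A, B, X}) (hY : Collinear 𝕜 {B, C, Y}) (hZ : Collinear 𝕜 {C, A, Z})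
    (hXYZ : Collinear 𝕜 {X, Y, Z}) (hXB : X ≠ B) (hYC : Y ≠ C) (hZA : Z ≠ A) :
    dist X A / dist X B * (dist Y B / dist Y C) * (dist Z C / dist Z A) = 1 := by
  obtain ⟨p, rfl⟩ := hX.exists_lineMap_eq (ne₁₂_of_not_collinear hABC)
  obtain ⟨q, rfl⟩ := hY.exists_lineMap_eq (ne₂₃_of_not_collinear hABC)
  obtain ⟨r, rfl⟩ := hZ.exists_lineMap_eq (ne₁₃_of_not_collinear hABC).symm
  have hnorm : ‖p‖ * ‖q‖ * ‖r‖ = ‖1 - p‖ * ‖1 - q‖ * ‖1 - r‖ := by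
    simpa only [norm_mul, norm_neg] using
      congrArg norm (mul_mul_eq_neg_of_collinear_lineMap hABC hXYZ)
  rw [← dist_ne_zero, dist_lineMap_right, mul_ne_zero_iff] at hXB hYC hZA
  obtain ⟨hp, hAB⟩ := hXB
  obtain ⟨hq, hBC⟩ := hYC
  obtain ⟨hr, hCA⟩ := hZA
  simp only [dist_lineMap_left, dist_lineMap_right]
  field_simp
  exact hnorm

theorem menelaus_quadrilateral_general (A1 A2 A3 A4 M1 M2 M3 M4 M : EuclideanSpace ℝ (Fin 2))
    (hT1 : ¬ Collinear ℝ ({A1, A2, A4} : Set (EuclideanSpace ℝ (Fin 2))))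
    (hT2 : ¬ Collinear ℝ ({A4, A2, A3} : Set (EuclideanSpace ℝ (Fin 2))))
    (hd : Collinear ℝ ({M1, M2, M3, M4, M} : Set (EuclideanSpace ℝ (Fin 2))))
    (h1 : Collinear ℝ ({A1, A2, M1} : Set (EuclideanSpace ℝ (Fin 2))))
    (h2 : Collinear ℝ ({A2, A3, M2} : Set (EuclideanSpace ℝ (Fin 2))))
    (h3 : Collinear ℝ ({A3, A4, M3} : Set (EuclideanSpace ℝ (Fin 2))))
    (h4 : Collinear ℝ ({A4, A1, M4} : Set (EuclideanSpace ℝ (Fin 2))))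
    (hM : Collinear ℝ ({A2, A4, M} : Set (EuclideanSpace ℝ (Fin 2))))
    (hM1A2 : M1 ≠ A2)
    (hM2A3 : M2 ≠ A3)
    (hM3A4 : M3 ≠ A4)
    (hM4A1 : M4 ≠ A1)
    (hMA2 : M ≠ A2) (hMA4 : M ≠ A4) :
    (dist M1 A1 / dist M1 A2) * (dist M2 A2 / dist M2 A3) *
      (dist M3 A3 / dist M3 A4) * (dist M4 A4 / dist M4 A1) = 1 := by
  have hd₁ : Collinear ℝ {M1, M, M4} := hd.subset (by simp [Set.insert_subset_iff])
  have hd₂ : Collinear ℝ {M, M2, M3} := hd.subset (by simp [Set.insert_subset_iff])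
  have E₁ := menelaus_triangle_s11 hT1 h1 hM h4 hd₁ hM1A2 hMA4 hM4A1
  have E₂ := menelaus_triangle_s11 hT2 (by rwa [Set.insert_comm]) h2 h3 hd₂ hMA2 hM2A3 hM3A4
  have hMA2' : dist M A2 ≠ 0 := dist_ne_zero.2 hMA2
  have hMA4' : dist M A4 ≠ 0 := dist_ne_zero.2 hMA4
  calc _ = (dist M1 A1 / dist M1 A2 * (dist M A2 / dist M A4) * (dist M4 A4 / dist M4 A1)) *
        (dist M A4 / dist M A2 * (dist M2 A2 / dist M2 A3) * (dist M3 A3 / dist M3 A4)) := by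
        field_simp
    _ = 1 := by rw [E₁, E₂, one_mul]

theorem menelaus_quadrilateral (A1 A2 A3 A4 M1 M2 M3 M4 M : EuclideanSpace ℝ (Fin 2))
    (hT1 : ¬ Collinear ℝ ({A1, A2, A4} : Set (EuclideanSpace ℝ (Fin 2))))
    (hT2 : ¬ Collinear ℝ ({A4, A2, A3} : Set (EuclideanSpace ℝ (Fin 2))))
    (hd : Collinear ℝ ({M1, M2, M3, M4, M} : Set (EuclideanSpace ℝ (Fin 2))))
    (h1 : Collinear ℝ ({A1, A2, M1} : Set (EuclideanSpace ℝ (Fin 2))))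
    (h2 : Collinear ℝ ({A2, A3, M2} : Set (EuclideanSpace ℝ (Fin 2))))
    (h3 : Collinear ℝ ({A3, A4, M3} : Set (EuclideanSpace ℝ (Fin 2))))
    (h4 : Collinear ℝ ({A4, A1, M4} : Set (EuclideanSpace ℝ (Fin 2))))
    (hM : Collinear ℝ ({A2, A4, M} : Set (EuclideanSpace ℝ (Fin 2))))
    (hM1A1 : M1 ≠ A1) (hM1A2 : M1 ≠ A2)
    (hM2A2 : M2 ≠ A2) (hM2A3 : M2 ≠ A3)
    (hM3A3 : M3 ≠ A3) (hM3A4 : M3 ≠ A4)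
    (hM4A4 : M4 ≠ A4) (hM4A1 : M4 ≠ A1)
    (hMA2 : M ≠ A2) (hMA4 : M ≠ A4) :
    (dist M1 A1 / dist M1 A2) * (dist M2 A2 / dist M2 A3) *
      (dist M3 A3 / dist M3 A4) * (dist M4 A4 / dist M4 A1) = 1 :=
  menelaus_quadrilateral_general A1 A2 A3 A4 M1 M2 M3 M4 M hT1 hT2 hd h1 h2 h3 h4 hM hM1A2 hM2A3
    hM3A4 hM4A1 hMA2 hMA4
end
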